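/- Suppose X_i = β°_i + U_i for i = 1,…,n, where U_1, U_2, … are i.i.d. mean-zero random vectors in ℝ^p satisfying condition (A1) with constant d₀ > 0, the cluster labels c(i) are deterministic with |G°_c|/n → π_c ∈ (0,1) for each c = 1,…,k, and λ_n ≥ 2p‖W^{1/2}‖√(log n/d₀) with ‖W^{1/2}‖ the Frobenius norm of W^{1/2}. Let (β̂, μ̂) be any measurable minimizer of SS_sp(·,·;λ_n) over B × 𝒰, and define the clustering estimator Ĝ = {Ĝ_1,…,Ĝ_k} by assigning each index i to a cluster Ĝ_c with c ∈ argmin_{1≤c'≤k} ‖W^{1/2}(β̂_i − μ̂_{c'})‖₁ (ties broken by the smallest such index). Then P(Ĝ = G°) → 1 as n → ∞ (exact cluster recovery implied by Theorem 3.1). -/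

import Mathlib

open MeasureTheory Filter Matrix
open scoped ENNReal

noncomputable section

/-- The ℓ¹ norm on ℝ^p. -/
def l1norm {p : ℕ} (x : Fin p → ℝ) : ℝ := ∑ j, |x j|

/-- The Euclidean norm on ℝ^p. -/
def eucnorm {p : ℕ} (x : Fin p → ℝ) : ℝ := Real.sqrt (∑ j, (x j) ^ 2)

/-- The Frobenius norm of a `p×p` real matrix. -/
def frobnorm {p : ℕ} (A : Matrix (Fin p) (Fin p) ℝ) : ℝ :=
  Real.sqrt (∑ i, ∑ j, (A i j) ^ 2)

/-- The separation-penalized objective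
`SS_sp(β,μ;λ) = (1/2)Σ_i (X_i − β_i)⊤W(X_i − β_i)
  + λ Σ_i min_{1≤c≤k} ‖W^{1/2}(β_i − μ_c)‖₁`. -/
def SSsp {p k n : ℕ} (W Whalf : Matrix (Fin p) (Fin p) ℝ)
    (X β : Fin n → Fin p → ℝ) (μ : Fin k → Fin p → ℝ) (lam : ℝ) : ℝ :=
  (1 / 2 : ℝ) * ∑ i, (X i - β i) ⬝ᵥ W.mulVec (X i - β i)
    + lam * ∑ i, ⨅ c : Fin k, l1norm (Whalf.mulVec (β i - μ c))

lemma l1norm_nonneg {p : ℕ} (x : Fin p → ℝ) : 0 ≤ l1norm x :=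
  Finset.sum_nonneg fun _ _ => abs_nonneg _

lemma l1norm_add_le {p : ℕ} (x y : Fin p → ℝ) : l1norm (x + y) ≤ l1norm x + l1norm y := by
  simpa [l1norm, ← Finset.sum_add_distrib] using
    Finset.sum_le_sum (fun j _ => abs_add_le (x j) (y j))

lemma l1norm_neg {p : ℕ} (x : Fin p → ℝ) : l1norm (-x) = l1norm x := by
  simp [l1norm]

lemma eucnorm_nonneg {p : ℕ} (x : Fin p → ℝ) : 0 ≤ eucnorm x := Real.sqrt_nonneg _

lemma eucnorm_sq {p : ℕ} (x : Fin p → ℝ) : eucnorm x ^ 2 = ∑ j, (x j)^2 :=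
  Real.sq_sqrt (Finset.sum_nonneg fun _ _ => sq_nonneg _)

lemma eucnorm_le_l1norm {p : ℕ} (x : Fin p → ℝ) : eucnorm x ≤ l1norm x := by
  have h : ∑ j, (x j)^2 ≤ (l1norm x)^2 := by
    have : ∀ j ∈ Finset.univ, (x j)^2 ≤ |x j| * l1norm x := by
      intro j _
      have h1 : |x j| ≤ l1norm x := Finset.single_le_sum (f := fun j => |x j|)
        (fun _ _ => abs_nonneg _) (Finset.mem_univ j)
      calc (x j)^2 = |x j| * |x j| := by rw [← sq_abs]; ring
        _ ≤ |x j| * l1norm x := mul_le_mul_of_nonneg_left h1 (abs_nonneg _)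
    calc ∑ j, (x j)^2 ≤ ∑ j, |x j| * l1norm x := Finset.sum_le_sum this
      _ = (l1norm x)^2 := by rw [← Finset.sum_mul]; rw [l1norm]; ring
  calc eucnorm x ≤ Real.sqrt ((l1norm x)^2) := Real.sqrt_le_sqrt h
    _ = l1norm x := Real.sqrt_sq (l1norm_nonneg x)

lemma dot_le_eucnorm {p : ℕ} (x y : Fin p → ℝ) : x ⬝ᵥ y ≤ eucnorm x * eucnorm y := by
  have cs := Finset.sum_mul_sq_le_sq_mul_sq Finset.univ x y
  have h1 : x ⬝ᵥ y ≤ Real.sqrt ((∑ j, (x j)^2) * ∑ j, (y j)^2) := by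
    rw [dotProduct]
    calc ∑ j, x j * y j ≤ |∑ j, x j * y j| := le_abs_self _
      _ = Real.sqrt ((∑ j, x j * y j)^2) := (Real.sqrt_sq_eq_abs _).symm
      _ ≤ _ := Real.sqrt_le_sqrt cs
  calc x ⬝ᵥ y ≤ _ := h1
    _ = eucnorm x * eucnorm y := Real.sqrt_mul (Finset.sum_nonneg fun _ _ => sq_nonneg _) _

lemma eucnorm_add_le {p : ℕ} (x y : Fin p → ℝ) :
    eucnorm (x + y) ≤ eucnorm x + eucnorm y := by
  have h : ∑ j, ((x+y) j)^2 ≤ (eucnorm x + eucnorm y)^2 := by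
    have e : ∑ j, ((x+y) j)^2 = (∑ j, (x j)^2) + 2 * (x ⬝ᵥ y) + ∑ j, (y j)^2 := by
      simp only [Pi.add_apply, dotProduct, Finset.mul_sum, ← Finset.sum_add_distrib]
      exact Finset.sum_congr rfl fun j _ => by ring
    have hx := eucnorm_sq x
    have hy := eucnorm_sq y
    have hd := dot_le_eucnorm x y
    nlinarith [eucnorm_nonneg x, eucnorm_nonneg y]
  calc eucnorm (x+y) ≤ Real.sqrt ((eucnorm x + eucnorm y)^2) := Real.sqrt_le_sqrt h
    _ = _ := Real.sqrt_sq (add_nonneg (eucnorm_nonneg x) (eucnorm_nonneg y))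

lemma quad_eq {p : ℕ} (W Whalf : Matrix (Fin p) (Fin p) ℝ)
    (hWhalf : Whalf.PosDef) (hsq : Whalf * Whalf = W) (z : Fin p → ℝ) :
    z ⬝ᵥ W.mulVec z = ∑ j, (Whalf.mulVec z j)^2 := by
  have hsym : Whalfᵀ = Whalf := by
    have := hWhalf.isHermitian
    rwa [Matrix.IsHermitian, Matrix.conjTranspose_eq_transpose_of_trivial] at this
  rw [← hsq, ← Matrix.mulVec_mulVec, Matrix.dotProduct_mulVec]
  rw [← Matrix.mulVec_transpose, hsym, dotProduct]
  exact Finset.sum_congr rfl fun j _ => (sq (Whalf.mulVec z j)).symm ▸ (sq ((Whalf.mulVec z) j)) ▸ by ring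

lemma l1norm_eq_zero {p : ℕ} {x : Fin p → ℝ} (h : l1norm x = 0) : x = 0 := by
  have := (Finset.sum_eq_zero_iff_of_nonneg (fun j _ => abs_nonneg (x j))).mp h
  funext j
  simpa using this j (Finset.mem_univ j)

lemma l1norm_mulVec_pos {p : ℕ} {Whalf : Matrix (Fin p) (Fin p) ℝ}
    (hWhalf : Whalf.PosDef) {v : Fin p → ℝ} (hv : v ≠ 0) :
    0 < l1norm (Whalf.mulVec v) := by
  rcases lt_or_eq_of_le (l1norm_nonneg (Whalf.mulVec v)) with h | h
  · exact h
  · exfalso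
    have hz : Whalf.mulVec v = 0 := l1norm_eq_zero h.symm
    have := hWhalf.dotProduct_mulVec_pos hv
    rw [hz] at this
    simp at this
lemma Dmu_facts {p k : ℕ} (hk : 2 ≤ k) {Whalf : Matrix (Fin p) (Fin p) ℝ}
    (hWhalf : Whalf.PosDef) {μo : Fin k → Fin p → ℝ} (hinj : Function.Injective μo)
    {Dμ : ℝ}
    (hDμ : Dμ = sInf {d : ℝ | ∃ c₁ c₂ : Fin k, c₁ ≠ c₂ ∧
      d = l1norm (Whalf.mulVec (μo c₁ - μo c₂))}) :
    0 < Dμ ∧ ∀ c₁ c₂ : Fin k, c₁ ≠ c₂ → Dμ ≤ l1norm (Whalf.mulVec (μo c₁ - μo c₂)) := by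
  set S := {d : ℝ | ∃ c₁ c₂ : Fin k, c₁ ≠ c₂ ∧
      d = l1norm (Whalf.mulVec (μo c₁ - μo c₂))} with hS
  have hfin : S.Finite := by
    apply Set.Finite.subset
      (Set.finite_range (fun q : Fin k × Fin k => l1norm (Whalf.mulVec (μo q.1 - μo q.2))))
    rintro d ⟨c₁, c₂, _, rfl⟩
    exact ⟨(c₁, c₂), rfl⟩
  have hne : S.Nonempty := by
    refine ⟨_, ⟨⟨0, by omega⟩, ⟨1, by omega⟩, ?_, rfl⟩⟩
    intro h
    simpa using congrArg Fin.val h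
  have hmem : Dμ ∈ S := hDμ ▸ Set.Nonempty.csInf_mem hne hfin
  constructor
  · obtain ⟨c₁, c₂, hne12, heq⟩ := hmem
    have : μo c₁ - μo c₂ ≠ 0 := by
      intro h
      exact hne12 (hinj (by rwa [sub_eq_zero] at h))
    exact heq ▸ l1norm_mulVec_pos hWhalf this
  · intro c₁ c₂ h
    rw [hDμ]
    exact csInf_le hfin.bddBelow ⟨c₁, c₂, h, rfl⟩
lemma frobnorm_nonneg {p : ℕ} (A : Matrix (Fin p) (Fin p) ℝ) : 0 ≤ frobnorm A :=
  Real.sqrt_nonneg _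

lemma frobnorm_pos {p : ℕ} (hp : 0 < p) {Whalf : Matrix (Fin p) (Fin p) ℝ}
    (hWhalf : Whalf.PosDef) : 0 < frobnorm Whalf := by
  rcases lt_or_eq_of_le (frobnorm_nonneg Whalf) with h | h
  · exact h
  · exfalso
    have hsum : ∑ i, ∑ j, (Whalf i j)^2 = 0 := by
      have h0 : Real.sqrt (∑ i, ∑ j, (Whalf i j)^2) = 0 := h.symm
      have hnn : 0 ≤ ∑ i, ∑ j, (Whalf i j)^2 :=
        Finset.sum_nonneg fun _ _ => Finset.sum_nonneg fun _ _ => sq_nonneg _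
      nlinarith [Real.sq_sqrt hnn]
    have hz : Whalf = 0 := by
      ext i j
      have hrow := (Finset.sum_eq_zero_iff_of_nonneg
        (fun i _ => Finset.sum_nonneg fun j _ => sq_nonneg (Whalf i j))).mp hsum i
        (Finset.mem_univ i)
      have := (Finset.sum_eq_zero_iff_of_nonneg (fun j _ => sq_nonneg (Whalf i j))).mp hrow j
        (Finset.mem_univ j)
      simpa [pow_eq_zero_iff] using this
    have hx : (Pi.single (⟨0, hp⟩ : Fin p) (1:ℝ)) ≠ (0 : Fin p → ℝ) := by
      intro hcon
      have := congrFun hcon ⟨0, hp⟩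
      simp at this
    have := hWhalf.dotProduct_mulVec_pos hx
    rw [hz] at this
    simp at this

lemma noise_bound {p : ℕ} (A : Matrix (Fin p) (Fin p) ℝ) (u : Fin p → ℝ) (v : ℝ) (hv : 0 ≤ v)
    (h : ∀ j, |A j ⬝ᵥ u| ≤ eucnorm (A j) * v) :
    eucnorm (A.mulVec u) ≤ frobnorm A * v := by
  have h2 : ∑ j, (A.mulVec u j)^2 ≤ (∑ i, ∑ j, (A i j)^2) * v^2 := by
    rw [Finset.sum_mul]
    apply Finset.sum_le_sum
    intro j _
    have hj := h j
    have habs : |A.mulVec u j| ≤ eucnorm (A j) * v := hj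
    have : (A.mulVec u j)^2 ≤ (eucnorm (A j) * v)^2 := by
      rw [← sq_abs]
      exact pow_le_pow_left₀ (abs_nonneg _) habs 2
    calc (A.mulVec u j)^2 ≤ (eucnorm (A j) * v)^2 := this
      _ = (∑ m, (A j m)^2) * v^2 := by rw [mul_pow, eucnorm_sq]
  calc eucnorm (A.mulVec u) ≤ Real.sqrt ((∑ i, ∑ j, (A i j)^2) * v^2) := Real.sqrt_le_sqrt h2
    _ = frobnorm A * v := by
        rw [Real.sqrt_mul' _ (sq_nonneg v), Real.sqrt_sq hv, frobnorm]

lemma sum_sq_add {p : ℕ} (y w : Fin p → ℝ) :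
    ∑ j, ((y + w) j)^2 = ∑ j, (y j)^2 + 2*(y ⬝ᵥ w) + ∑ j, (w j)^2 := by
  simp only [Pi.add_apply, dotProduct, Finset.mul_sum, ← Finset.sum_add_distrib]
  exact Finset.sum_congr rfl fun j _ => by ring

lemma l1norm_mulVec_sub_symm {p : ℕ} (A : Matrix (Fin p) (Fin p) ℝ) (a b : Fin p → ℝ) :
    l1norm (A.mulVec (a - b)) = l1norm (A.mulVec (b - a)) := by
  rw [← neg_sub b a, Matrix.mulVec_neg, l1norm_neg]

lemma l1norm_mulVec_triangle {p : ℕ} (A : Matrix (Fin p) (Fin p) ℝ) (a b c : Fin p → ℝ) :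
    l1norm (A.mulVec (a - c)) ≤ l1norm (A.mulVec (a - b)) + l1norm (A.mulVec (b - c)) := by
  have : a - c = (a - b) + (b - c) := by abel
  rw [this, Matrix.mulVec_add]
  exact l1norm_add_le _ _

lemma core {p k n : ℕ} (hk : 2 ≤ k)
    (W Whalf : Matrix (Fin p) (Fin p) ℝ) (hWhalf : Whalf.PosDef) (hsq : Whalf * Whalf = W)
    (μo : Fin k → Fin p → ℝ)
    (Dμ : ℝ) (hDpos : 0 < Dμ)
    (hDle : ∀ c₁ c₂ : Fin k, c₁ ≠ c₂ → Dμ ≤ l1norm (Whalf.mulVec (μo c₁ - μo c₂)))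
    (lab : Fin n → Fin k)
    (X βh : Fin n → Fin p → ℝ) (μh : Fin k → Fin p → ℝ) (lam : ℝ) (T : ℝ) (hT : 0 ≤ T)
    (hlam : T + Dμ / 2 < lam)
    (hβB : ∀ i, l1norm (Whalf.mulVec (βh i - μo (lab i))) ≤ Dμ / 4)
    (hμU : ∀ c, l1norm (Whalf.mulVec (μh c - μo c)) ≤ Dμ / 4)
    (hnoise : ∀ i, eucnorm (Whalf.mulVec (X i - μo (lab i))) ≤ T)
    (hmin : ∀ β : Fin n → Fin p → ℝ,
      (∀ i, l1norm (Whalf.mulVec (β i - μo (lab i))) ≤ Dμ / 4) →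
      SSsp W Whalf X βh μh lam ≤ SSsp W Whalf X β μh lam) :
    ∀ (i : Fin n) (c : Fin k), c ≠ lab i →
      l1norm (Whalf.mulVec (βh i - μh (lab i))) < l1norm (Whalf.mulVec (βh i - μh c)) := by
  haveI : Nonempty (Fin k) := ⟨⟨0, by omega⟩⟩
  intro i c hc
  -- step 1 : distance to the true center is at most Dμ/2
  have h1 : l1norm (Whalf.mulVec (βh i - μh (lab i))) ≤ Dμ / 2 := by
    have := l1norm_mulVec_triangle Whalf (βh i) (μo (lab i)) (μh (lab i))
    have h2 := hβB i
    have h3 := hμU (lab i)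
    rw [l1norm_mulVec_sub_symm Whalf (μo (lab i)) (μh (lab i))] at this
    linarith
  -- step 2 : distance to any wrong center is at least Dμ/2
  have h2 : ∀ c' : Fin k, c' ≠ lab i → Dμ / 2 ≤ l1norm (Whalf.mulVec (βh i - μh c')) := by
    intro c' hc'
    have hD := hDle (lab i) c' (fun h => hc' h.symm)
    have t1 := l1norm_mulVec_triangle Whalf (μo (lab i)) (βh i) (μo c')
    have t2 := l1norm_mulVec_triangle Whalf (βh i) (μh c') (μo c')
    have h3 := hβB i
    have h4 := hμU c'
    rw [l1norm_mulVec_sub_symm Whalf (μo (lab i)) (βh i)] at t1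
    linarith
  -- step 3 : the distance to the true center is strictly below Dμ/2
  have h3 : l1norm (Whalf.mulVec (βh i - μh (lab i))) < Dμ / 2 := by
    by_contra hcon
    push_neg at hcon
    have heq : l1norm (Whalf.mulVec (βh i - μh (lab i))) = Dμ / 2 := le_antisymm h1 hcon
    -- the infimum of the distances is exactly Dμ/2
    have hinf : (⨅ c' : Fin k, l1norm (Whalf.mulVec (βh i - μh c'))) = Dμ / 2 := by
      apply le_antisymm
      · exact heq ▸ ciInf_le (Set.Finite.bddBelow (Set.finite_range _)) (lab i)
      · apply le_ciInf
        intro c'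
        by_cases h : c' = lab i
        · rw [h, heq]
        · exact h2 c' h
    -- compare with the competitor that moves βh i to μh (lab i)
    set β' := Function.update βh i (μh (lab i)) with hβ'
    have hfeas : ∀ i', l1norm (Whalf.mulVec (β' i' - μo (lab i'))) ≤ Dμ / 4 := by
      intro i'
      by_cases h : i' = i
      · subst h
        simp only [hβ', Function.update_self]
        exact hμU (lab i')
      · simp only [hβ', Function.update_of_ne h]
        exact hβB i'
    have hss := hmin β' hfeas
    -- expand the two objectives
    have hquad : ∀ z : Fin p → ℝ, z ⬝ᵥ W.mulVec z = ∑ j, (Whalf.mulVec z j)^2 :=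
      quad_eq W Whalf hWhalf hsq
    set y := Whalf.mulVec (X i - βh i) with hy
    set w := Whalf.mulVec (βh i - μh (lab i)) with hw
    set q : (Fin n → Fin p → ℝ) → Fin n → ℝ :=
      fun β i' => (X i' - β i') ⬝ᵥ W.mulVec (X i' - β i') with hq
    set m : (Fin n → Fin p → ℝ) → Fin n → ℝ :=
      fun β i' => ⨅ c', l1norm (Whalf.mulVec (β i' - μh c')) with hm
    have hsplit : ∀ g : Fin n → ℝ, ∑ i', g i' = g i + ∑ i' ∈ Finset.univ.erase i, g i' :=
      fun g => (Finset.add_sum_erase _ g (Finset.mem_univ i)).symm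
    have hqeq : ∑ i' ∈ Finset.univ.erase i, q β' i' = ∑ i' ∈ Finset.univ.erase i, q βh i' := by
      refine Finset.sum_congr rfl fun i' hi' => ?_
      have hne : i' ≠ i := Finset.ne_of_mem_erase hi'
      simp only [hq, hβ', Function.update_of_ne hne]
    have hmeq : ∑ i' ∈ Finset.univ.erase i, m β' i' = ∑ i' ∈ Finset.univ.erase i, m βh i' := by
      refine Finset.sum_congr rfl fun i' hi' => ?_
      have hne : i' ≠ i := Finset.ne_of_mem_erase hi'
      simp only [hm, hβ', Function.update_of_ne hne]
    have hkey : (1/2 : ℝ) * q βh i + lam * m βh i ≤ (1/2 : ℝ) * q β' i + lam * m β' i := by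
      have e1 := hsplit (q βh); have e2 := hsplit (q β')
      have e3 := hsplit (m βh); have e4 := hsplit (m β')
      simp only [SSsp] at hss
      rw [show (∑ i', (X i' - βh i') ⬝ᵥ W.mulVec (X i' - βh i')) = ∑ i', q βh i' from rfl,
        show (∑ i', (X i' - β' i') ⬝ᵥ W.mulVec (X i' - β' i')) = ∑ i', q β' i' from rfl,
        show (∑ i', ⨅ c', l1norm (Whalf.mulVec (βh i' - μh c'))) = ∑ i', m βh i' from rfl,
        show (∑ i', ⨅ c', l1norm (Whalf.mulVec (β' i' - μh c'))) = ∑ i', m β' i' from rfl,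
        e1, e2, e3, e4, hqeq, hmeq] at hss
      nlinarith [hss]
    have hmβh : m βh i = Dμ / 2 := hinf
    have hmβ' : m β' i = 0 := by
      apply le_antisymm
      · have : l1norm (Whalf.mulVec (β' i - μh (lab i))) = 0 := by
          simp only [hβ', Function.update_self, sub_self, Matrix.mulVec_zero]
          simp [l1norm]
        exact this ▸ ciInf_le (Set.Finite.bddBelow (Set.finite_range _)) (lab i)
      · exact le_ciInf fun c' => l1norm_nonneg _
    have hqβh : q βh i = ∑ j, (y j)^2 := hquad _
    have hqβ' : q β' i = ∑ j, ((y + w) j)^2 := by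
      have hxy : X i - β' i = (X i - βh i) + (βh i - μh (lab i)) := by
        simp only [hβ', Function.update_self]; abel
      rw [hq]
      simp only [hxy]
      rw [hquad, Matrix.mulVec_add]
    rw [hmβh, hmβ', hqβh, hqβ', sum_sq_add, mul_zero] at hkey
    -- hence lam * (Dμ/2) ≤ y ⬝ᵥ w + (1/2) * ∑ w²
    have hstep : lam * (Dμ/2) ≤ y ⬝ᵥ w + (1/2 : ℝ) * ∑ j, (w j)^2 := by nlinarith [hkey]
    -- bounds
    have hwl1 : l1norm w = Dμ / 2 := heq
    have hew : eucnorm w ≤ Dμ / 2 := hwl1 ▸ eucnorm_le_l1norm w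
    have hwsq : ∑ j, (w j)^2 ≤ (Dμ/2)^2 := by
      have := eucnorm_sq w
      nlinarith [eucnorm_nonneg w]
    have hey : eucnorm y ≤ T + Dμ / 4 := by
      have hxy : X i - βh i = (X i - μo (lab i)) + (μo (lab i) - βh i) := by abel
      have : y = Whalf.mulVec (X i - μo (lab i)) + Whalf.mulVec (μo (lab i) - βh i) := by
        rw [hy, hxy, Matrix.mulVec_add]
      rw [this]
      have b1 := hnoise i
      have b2 : eucnorm (Whalf.mulVec (μo (lab i) - βh i)) ≤ Dμ / 4 := by
        calc eucnorm (Whalf.mulVec (μo (lab i) - βh i))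
            ≤ l1norm (Whalf.mulVec (μo (lab i) - βh i)) := eucnorm_le_l1norm _
          _ = l1norm (Whalf.mulVec (βh i - μo (lab i))) :=
              l1norm_mulVec_sub_symm Whalf _ _
          _ ≤ Dμ / 4 := hβB i
      calc eucnorm (Whalf.mulVec (X i - μo (lab i)) + Whalf.mulVec (μo (lab i) - βh i))
          ≤ _ + _ := eucnorm_add_le _ _
        _ ≤ T + Dμ / 4 := add_le_add b1 b2
    have hdot : y ⬝ᵥ w ≤ (T + Dμ/4) * (Dμ/2) := by
      calc y ⬝ᵥ w ≤ eucnorm y * eucnorm w := dot_le_eucnorm y w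
        _ ≤ (T + Dμ/4) * (Dμ/2) :=
            mul_le_mul hey hew (eucnorm_nonneg w) (by linarith)
    nlinarith [hstep, hdot, hwsq, hDpos, hlam]
  exact lt_of_lt_of_le h3 (h2 c hc)

/-- Exact cluster recovery implied by Theorem 3.1: if `(β̂, μ̂)` is any measurable
minimizer of `SS_sp(·,·;λ_n)` over `B × 𝒰` and the clustering estimator `Ĝ` assigns each
index `i` to a cluster `Ĝ_c` with `c ∈ argmin_{c'} ‖W^{1/2}(β̂_i − μ̂_{c'})‖₁` (ties
broken by the smallest such index, encoded by `hchat`), then `P(Ĝ = G°) → 1` as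
`n → ∞`. -/
theorem exact_cluster_recovery {p k : ℕ} (hk : 2 ≤ k)
    (W Whalf : Matrix (Fin p) (Fin p) ℝ)
    (hW : W.PosDef) (hWhalf : Whalf.PosDef) (hsq : Whalf * Whalf = W)
    (μo : Fin k → Fin p → ℝ) (hinj : Function.Injective μo)
    (Dμ : ℝ)
    (hDμ : Dμ = sInf {d : ℝ | ∃ c₁ c₂ : Fin k, c₁ ≠ c₂ ∧
      d = l1norm (Whalf.mulVec (μo c₁ - μo c₂))})
    {Ω : Type*} [MeasurableSpace Ω] (P : Measure Ω) [IsProbabilityMeasure P]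
    (U : ℕ → Ω → Fin p → ℝ) (hUmeas : ∀ i, Measurable (U i))
    (hiid : ProbabilityTheory.iIndepFun U P)
    (hident : ∀ i, Measure.map (U i) P = Measure.map (U 0) P)
    (hmean : ∀ i j, ∫ ω, U i ω j ∂P = 0)
    (d₀ : ℝ) (hd₀ : 0 < d₀)
    (hA1 : ∀ (i : ℕ) (a : Fin p → ℝ) (v : ℝ), 0 < v →
      P {ω | eucnorm a * v < |a ⬝ᵥ U i ω|}
        ≤ ENNReal.ofReal (2 * Real.exp (-d₀ * v ^ 2)))
    (labels : (n : ℕ) → Fin n → Fin k)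
    (πc : Fin k → ℝ) (hπc : ∀ c, 0 < πc c ∧ πc c < 1)
    (hfreq : ∀ c : Fin k, Tendsto
      (fun n => (((Finset.univ.filter (fun i : Fin n => labels n i = c)).card : ℝ)) / n)
      atTop (nhds (πc c)))
    (lam : ℕ → ℝ)
    (hlam : ∀ n : ℕ,
      2 * p * frobnorm Whalf * Real.sqrt (Real.log n / d₀) ≤ lam n)
    (X : (n : ℕ) → Ω → Fin n → Fin p → ℝ)
    (hX : ∀ n ω (i : Fin n), X n ω i = μo (labels n i) + U i ω)
    (Bset : (n : ℕ) → Set (Fin n → Fin p → ℝ))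
    (hB : ∀ n, Bset n =
      {β | ∀ i : Fin n, l1norm (Whalf.mulVec (β i - μo (labels n i))) ≤ Dμ / 4})
    (Uset : Set (Fin k → Fin p → ℝ))
    (hUset : Uset = {μ | ∀ c : Fin k, l1norm (Whalf.mulVec (μ c - μo c)) ≤ Dμ / 4})
    -- a measurable minimizer of the separation-penalized objective over B × 𝒰
    (βhat : (n : ℕ) → Ω → Fin n → Fin p → ℝ)
    (μhat : (n : ℕ) → Ω → Fin k → Fin p → ℝ)
    (hβhatmeas : ∀ n, Measurable (βhat n)) (hμhatmeas : ∀ n, Measurable (μhat n))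
    (hmin : ∀ n ω, βhat n ω ∈ Bset n ∧ μhat n ω ∈ Uset ∧
      ∀ β ∈ Bset n, ∀ μ ∈ Uset,
        SSsp W Whalf (X n ω) (βhat n ω) (μhat n ω) (lam n)
          ≤ SSsp W Whalf (X n ω) β μ (lam n))
    -- the clustering estimator: each i is assigned to the smallest index c among the
    -- minimizers of c' ↦ ‖W^{1/2}(β̂_i − μ̂_{c'})‖₁
    (chat : (n : ℕ) → Ω → Fin n → Fin k)
    (hchat : ∀ n ω (i : Fin n),
      (∀ c' : Fin k,
        l1norm (Whalf.mulVec (βhat n ω i - μhat n ω (chat n ω i)))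
          ≤ l1norm (Whalf.mulVec (βhat n ω i - μhat n ω c')))
      ∧ ∀ c : Fin k,
          (∀ c' : Fin k, l1norm (Whalf.mulVec (βhat n ω i - μhat n ω c))
            ≤ l1norm (Whalf.mulVec (βhat n ω i - μhat n ω c')))
          → chat n ω i ≤ c) :
    Tendsto (fun n => P {ω | ∀ i : Fin n, chat n ω i = labels n i}) atTop (nhds 1) := by
  classical
  haveI : Nonempty (Fin k) := ⟨⟨0, by omega⟩⟩
  -- p is positive
  have hp : 0 < p := by
    rcases Nat.eq_zero_or_pos p with h0 | h
    · exfalso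
      subst h0
      have : μo ⟨0, by omega⟩ = μo ⟨1, by omega⟩ := funext fun j => j.elim0
      have := hinj this
      simp [Fin.ext_iff] at this
    · exact h
  obtain ⟨hDpos, hDle⟩ := Dmu_facts hk hWhalf hinj hDμ
  set C := frobnorm Whalf with hC
  have hCpos : 0 < C := frobnorm_pos hp hWhalf
  set v : ℕ → ℝ := fun n => Real.sqrt (2 * Real.log n / d₀) with hv
  set Bad : (n : ℕ) → Set Ω := fun n => ⋃ i : Fin n, ⋃ j : Fin p,
      {ω | eucnorm (Whalf j) * v n < |Whalf j ⬝ᵥ U i ω|} with hBad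
  have hBadMeas : ∀ n, MeasurableSet (Bad n) := by
    intro n
    apply MeasurableSet.iUnion; intro i
    apply MeasurableSet.iUnion; intro j
    have hm : Measurable fun ω => Whalf j ⬝ᵥ U i ω := by
      simp only [dotProduct]
      exact Finset.measurable_sum _ fun m _ =>
        ((measurable_pi_apply m).comp (hUmeas i)).const_mul _
    exact measurableSet_lt measurable_const hm.abs
  set r : ℕ → ℝ := fun n => (n * p : ℕ) * (2 * Real.exp (-d₀ * v n ^ 2)) with hr
  -- union bound
  have hProb : ∀ n : ℕ, 0 < v n → P (Bad n) ≤ ENNReal.ofReal (r n) := by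
    intro n hvn
    have step : P (Bad n) ≤ ∑ i : Fin n, ∑ j : Fin p,
        P {ω | eucnorm (Whalf j) * v n < |Whalf j ⬝ᵥ U i ω|} := by
      refine le_trans (measure_iUnion_fintype_le _ _) ?_
      exact Finset.sum_le_sum fun i _ => measure_iUnion_fintype_le _ _
    have step2 : ∑ i : Fin n, ∑ j : Fin p,
        P {ω | eucnorm (Whalf j) * v n < |Whalf j ⬝ᵥ U i ω|}
        ≤ ∑ _i : Fin n, ∑ _j : Fin p,
          ENNReal.ofReal (2 * Real.exp (-d₀ * v n ^ 2)) := by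
      refine Finset.sum_le_sum fun i _ => Finset.sum_le_sum fun j _ => ?_
      exact hA1 i (Whalf j) (v n) hvn
    have step3 : (∑ _i : Fin n, ∑ _j : Fin p,
        ENNReal.ofReal (2 * Real.exp (-d₀ * v n ^ 2))) = ENNReal.ofReal (r n) := by
      simp only [Finset.sum_const, Finset.card_univ, Fintype.card_fin, nsmul_eq_mul, hr]
      conv_rhs => rw [ENNReal.ofReal_mul (by positivity), ENNReal.ofReal_natCast]
      push_cast
      ring
    exact step.trans (step2.trans step3.le)
  -- the real bound tends to 0
  have hr0 : Tendsto r atTop (nhds 0) := by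
    have hev : ∀ᶠ n : ℕ in atTop, r n = 2 * p / n := by
      filter_upwards [eventually_ge_atTop 1] with n hn
      have hnpos : (0:ℝ) < n := by exact_mod_cast hn
      have hlog : 0 ≤ Real.log n := Real.log_nonneg (by exact_mod_cast hn)
      have hvsq : v n ^ 2 = 2 * Real.log n / d₀ :=
        Real.sq_sqrt (by positivity)
      have hexp : Real.exp (-d₀ * v n ^ 2) = ((n:ℝ))⁻¹ * ((n:ℝ))⁻¹ := by
        rw [hvsq]
        have : -d₀ * (2 * Real.log n / d₀) = (-Real.log n) + (-Real.log n) := by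
          field_simp; ring
        rw [this, Real.exp_add, Real.exp_neg, Real.exp_log hnpos]
      rw [hr]
      simp only [hexp]
      push_cast
      field_simp
    rw [tendsto_congr' hev]
    exact tendsto_const_div_atTop_nhds_zero_nat (2 * (p : ℝ))
  -- eventual goodness
  have hQ : ∀ᶠ n : ℕ in atTop, Dμ < C * Real.sqrt (Real.log n / d₀) := by
    have ht : Tendsto (fun n : ℕ => Real.log n / d₀) atTop atTop :=
      Tendsto.atTop_div_const hd₀ (Real.tendsto_log_atTop.comp tendsto_natCast_atTop_atTop)
    filter_upwards [ht.eventually_gt_atTop ((Dμ / C) ^ 2)] with n hn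
    have h1 : Dμ / C < Real.sqrt (Real.log n / d₀) :=
      (Real.lt_sqrt (by positivity)).2 hn
    calc Dμ = C * (Dμ / C) := by field_simp
      _ < C * Real.sqrt (Real.log n / d₀) := by
          exact mul_lt_mul_of_pos_left h1 hCpos
  -- goodness implies 0 < v n and the lambda gap
  have hQv : ∀ n : ℕ, Dμ < C * Real.sqrt (Real.log n / d₀) → 0 < v n := by
    intro n hQn
    have h1 : 0 < Real.sqrt (Real.log n / d₀) := by
      by_contra h
      push_neg at h
      nlinarith
    have h2 : 0 < Real.log n / d₀ := Real.sqrt_pos.mp h1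
    have hlog : 0 < Real.log n := by
      rcases div_pos_iff.mp h2 with ⟨h3, _⟩ | ⟨_, h4⟩
      · exact h3
      · linarith
    have : 0 < 2 * Real.log n / d₀ := by positivity
    exact Real.sqrt_pos.mpr this
  have hQlam : ∀ n : ℕ, Dμ < C * Real.sqrt (Real.log n / d₀) →
      C * v n + Dμ / 2 < lam n := by
    intro n hQn
    set t := Real.sqrt (Real.log n / d₀) with htdef
    have ht0 : 0 ≤ t := Real.sqrt_nonneg _
    have hvt : v n = Real.sqrt 2 * t := by
      simp only [hv]
      rw [mul_div_assoc, Real.sqrt_mul (by norm_num)]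
    have hs2 : Real.sqrt 2 ≤ 1.5 := by
      rw [show (1.5:ℝ) = Real.sqrt (1.5 ^ 2) from (Real.sqrt_sq (by norm_num)).symm]
      exact Real.sqrt_le_sqrt (by norm_num)
    have hlamn := hlam n
    have hp1 : (1:ℝ) ≤ (p:ℝ) := by exact_mod_cast hp
    rw [hvt]
    have hct : 0 ≤ C * t := mul_nonneg hCpos.le ht0
    nlinarith [mul_le_mul_of_nonneg_right hs2 hct,
      mul_le_mul_of_nonneg_right hp1 hct]
  -- on the good event the clustering is exact
  have hInc : ∀ n : ℕ, Dμ < C * Real.sqrt (Real.log n / d₀) →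
      (Bad n)ᶜ ⊆ {ω | ∀ i : Fin n, chat n ω i = labels n i} := by
    intro n hQn ω hω
    have hnb : ∀ (i : Fin n) (j : Fin p),
        |Whalf j ⬝ᵥ U i ω| ≤ eucnorm (Whalf j) * v n := by
      intro i j
      by_contra h
      push_neg at h
      exact hω (Set.mem_iUnion.2 ⟨i, Set.mem_iUnion.2 ⟨j, h⟩⟩)
    have hnoise : ∀ i : Fin n,
        eucnorm (Whalf.mulVec (X n ω i - μo (labels n i))) ≤ C * v n := by
      intro i
      have hXi : X n ω i - μo (labels n i) = U i ω := by
        rw [hX]; abel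
      rw [hXi]
      exact noise_bound Whalf (U i ω) (v n) (Real.sqrt_nonneg _) (fun j => hnb i j)
    obtain ⟨hβB0, hμU0, hminn⟩ := hmin n ω
    have hβB : ∀ i, l1norm (Whalf.mulVec (βhat n ω i - μo (labels n i))) ≤ Dμ / 4 := by
      have := hβB0; rw [hB] at this; exact this
    have hμU : ∀ c, l1norm (Whalf.mulVec (μhat n ω c - μo c)) ≤ Dμ / 4 := by
      have := hμU0; rw [hUset] at this; exact this
    have hcore := core hk W Whalf hWhalf hsq μo Dμ hDpos hDle (labels n)
      (X n ω) (βhat n ω) (μhat n ω) (lam n) (C * v n)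
      (mul_nonneg hCpos.le (Real.sqrt_nonneg _)) (hQlam n hQn) hβB hμU hnoise
      (fun β hβ => hminn β (by rw [hB]; exact hβ) (μhat n ω) hμU0)
    intro i
    by_contra hne
    have h1 := (hchat n ω i).1 (labels n i)
    have h2 := hcore i (chat n ω i) hne
    exact absurd h1 (not_le.2 h2)
  -- squeeze
  have hlow : Tendsto (fun n => 1 - ENNReal.ofReal (r n)) atTop (nhds 1) := by
    have h0 : Tendsto (fun n => ENNReal.ofReal (r n)) atTop (nhds 0) := by
      have := ENNReal.tendsto_ofReal (f := atTop) hr0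
      simpa using this
    have hc : Continuous (fun x : ℝ≥0∞ => 1 - x) :=
      ENNReal.continuous_sub_left ENNReal.one_ne_top
    have := (hc.tendsto 0).comp h0
    simpa [Function.comp_def] using this
  refine tendsto_of_tendsto_of_tendsto_of_le_of_le' hlow tendsto_const_nhds ?_ ?_
  · filter_upwards [hQ] with n hQn
    have hv0 := hQv n hQn
    calc 1 - ENNReal.ofReal (r n) ≤ 1 - P (Bad n) :=
          tsub_le_tsub_left (hProb n hv0) 1
      _ = P (Bad n)ᶜ := (prob_compl_eq_one_sub (hBadMeas n)).symm
      _ ≤ P {ω | ∀ i : Fin n, chat n ω i = labels n i} := measure_mono (hInc n hQn)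
  · exact Eventually.of_forall fun n => prob_le_one

end
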